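/- Let ι : H ↪ G be a closed subgroup, M_H a Cartesian cohomology functor for (H, Σ∩H), M_G a Cartesian cohomology functor for (G, Σ), and ι_⋆ : M_H → M_G a pushforward map. Fix u ∈ G, a compact subgroup K ⊆ H, and z ∈ M_{H,Iw}(K). For an open compact subgroup U ⊆ Σ with uUu⁻¹ ⊆ Σ and [K : K ∩ uUu⁻¹] finite, let z_U ∈ M_G(U) denote the image of z under the composite of: the finite pullback M_{H,Iw}(K) → M_{H,Iw}(K ∩ uUu⁻¹), the pushforward M_{H,Iw}(K ∩ uUu⁻¹) → M_{H,Iw}(H ∩ uUu⁻¹), the map ι_{uUu⁻¹,⋆} : M_{H,Iw}(H ∩ uUu⁻¹) → M_G(uUu⁻¹), and the conjugation isomorphism [u]_⋆ : M_G(uUu⁻¹) → M_G(U). Now let U'' ⊆ U' ⊆ U be three such open compact subgroups and suppose: (i) K ∩ uU''u⁻¹ = K ∩ uU'u⁻¹; (ii) there is a finite set R ⊆ (u⁻¹Ku) ∩ U with U = ⨆_{γ ∈ R} U'γ, and [K ∩ uUu⁻¹ : K ∩ uU'u⁻¹] = [U : U']. Then pr_{U'', U', ⋆}(z_{U''}) =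 pr^⋆_{U', U}(z_{U'}) in M_G(U'). Consequently, if moreover τ ∈ Σ⁻¹ satisfies U' = U ∩ τUτ⁻¹ and τ⁻¹U''τ ⊆ U, then [τ]_{U'', U, ⋆}(z_{U''}) = T_U(z_U), where T_U = pr_{τ⁻¹U'τ, U, ⋆} ∘ [τ]_{U', τ⁻¹U'τ, ⋆} ∘ pr^⋆_{U', U} is the Hecke operator of the double coset U τ⁻¹ U. -/

import Mathlib

/-- The conjugate subgroup `γ U γ⁻¹`. -/
def conjSub {G : Type*} [Group G] (γ : G) (U : Subgroup G) : Subgroup G :=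
  U.map (MulAut.conj γ).toMonoidHom

/-- A *cohomology functor* for a group `G`, with objects the subgroups satisfying the
predicate `P` (in practice: the open compact subgroups contained in an open submonoid `Σ`),
monoid of admissible twists `S` (in practice `Σ`), and coefficients in a commutative
ring `A`.  It consists of `A`-modules `M U`, contravariant pullback maps
`pull g U V : M V →ₗ M U` (for the morphism `[g] : U → V` of `𝒫(G, Σ)`, i.e. `g ∈ S` and
`g⁻¹ U g ⊆ V`) and covariant pushforward maps `push g U V : M U →ₗ M V` (for the morphism
`[g] : U → V` of `𝒫(G, Σ⁻¹)`, i.e. `g⁻¹ ∈ S` and `g⁻¹ U g ⊆ V`), which are functorial,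
depend only on the double coset `U g V`, and satisfy `[g]^⋆ = [g⁻¹]_⋆` when
`g⁻¹ U g = V`. -/
structure CohFunctor (G : Type*) [Group G] (P : Subgroup G → Prop) (S : Set G)
    (A : Type*) [CommRing A] where
  M : Subgroup G → Type*
  addCommGroup : ∀ U, AddCommGroup (M U)
  module : ∀ U, Module A (M U)
  pull : ∀ (g : G) (U V : Subgroup G), M V →ₗ[A] M U
  push : ∀ (g : G) (U V : Subgroup G), M U →ₗ[A] M V
  pull_id : ∀ U, P U → pull 1 U U = LinearMap.id
  push_id : ∀ U, P U → push 1 U U = LinearMap.id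
  pull_comp : ∀ (g h : G) (U V W : Subgroup G), P U → P V → P W →
    g ∈ S → h ∈ S → (∀ x ∈ U, g⁻¹ * x * g ∈ V) → (∀ x ∈ V, h⁻¹ * x * h ∈ W) →
    (pull g U V).comp (pull h V W) = pull (g * h) U W
  push_comp : ∀ (g h : G) (U V W : Subgroup G), P U → P V → P W →
    g⁻¹ ∈ S → h⁻¹ ∈ S → (∀ x ∈ U, g⁻¹ * x * g ∈ V) → (∀ x ∈ V, h⁻¹ * x * h ∈ W) →
    (push h V W).comp (push g U V) = push (g * h) U W
  pull_congr : ∀ (g u v : G) (U V : Subgroup G), P U → P V → g ∈ S →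
    (∀ x ∈ U, g⁻¹ * x * g ∈ V) → u ∈ U → v ∈ V → pull (u * g * v) U V = pull g U V
  push_congr : ∀ (g u v : G) (U V : Subgroup G), P U → P V → g⁻¹ ∈ S →
    (∀ x ∈ U, g⁻¹ * x * g ∈ V) → u ∈ U → v ∈ V → push (u * g * v) U V = push g U V
  pull_eq_push : ∀ (g : G) (U V : Subgroup G), P U → P V → g ∈ S →
    conjSub g⁻¹ U = V → pull g U V = push g⁻¹ V U

attribute [instance] CohFunctor.addCommGroup CohFunctor.module

namespace CohFunctor

variable {G : Type*} [Group G] {P : Subgroup G → Prop} {S : Set G}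
  {A : Type*} [CommRing A]

/-- The Cartesian (Mackey) condition: for objects `U, U' ≤ V` and any finite set `R` of
representatives of the double cosets `U\V/U'`, the composite `pr^⋆_{U,V} ∘ pr_{U',V,⋆}`
equals the sum over `γ ∈ R` of `pr_{U_γ,U,⋆} ∘ [γ]^⋆` with `U_γ = γU'γ⁻¹ ∩ U`. -/
def IsCartesian (F : CohFunctor G P S A) : Prop :=
  ∀ (U U' V : Subgroup G), P U → P U' → P V → U ≤ V → U' ≤ V →
    ∀ R : Finset G, (↑R : Set G) ⊆ (V : Set G) →
      (∀ v ∈ V, ∃ γ ∈ R, ∃ x ∈ U, ∃ y ∈ U', v = x * γ * y) →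
      (∀ γ ∈ R, ∀ γ' ∈ R, (∃ x ∈ U, ∃ y ∈ U', γ' = x * γ * y) → γ = γ') →
      (F.pull 1 U V).comp (F.push 1 U' V) =
        ∑ γ ∈ R, (F.push 1 (conjSub γ U' ⊓ U) U).comp (F.pull γ (conjSub γ U' ⊓ U) U')

/-- The Iwasawa completion `M_Iw(K) = lim_U M(U)`, the inverse limit over the objects `U`
containing the compact subgroup `K`, with respect to the pushforward maps `pr_⋆`. -/
def Iw (F : CohFunctor G P S A) (K : Subgroup G) :
    Submodule A (∀ U : {U : Subgroup G // P U ∧ K ≤ U}, F.M U.1) where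
  carrier := {f | ∀ (U V : {U : Subgroup G // P U ∧ K ≤ U}), U.1 ≤ V.1 →
      F.push 1 U.1 V.1 (f U) = f V}
  add_mem' := by
    intro f g hf hg U V h
    simp only [Pi.add_apply, map_add, hf U V h, hg U V h]
  zero_mem' := by
    intro U V h
    simp
  smul_mem' := by
    intro c f hf U V h
    simp only [Pi.smul_apply, map_smul, hf U V h]

/-- Projection from the Iwasawa completion at `K` to the value at an object `U ⊇ K`. -/
def IwProj (F : CohFunctor G P S A) (K U : Subgroup G) (hU : P U) (hKU : K ≤ U) :
    F.Iw K →ₗ[A] F.M U :=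
  (LinearMap.proj (⟨U, hU, hKU⟩ : {U : Subgroup G // P U ∧ K ≤ U})).comp (F.Iw K).subtype

/-- The pushforward `pr_⋆ : M_Iw(K₁) → M_Iw(K₂)` on Iwasawa completions, for compact
subgroups `K₁ ≤ K₂` (restriction of compatible families). -/
def IwRes (F : CohFunctor G P S A) (K₁ K₂ : Subgroup G) (h : K₁ ≤ K₂) :
    F.Iw K₁ →ₗ[A] F.Iw K₂ where
  toFun f := ⟨fun U => f.1 ⟨U.1, U.2.1, le_trans h U.2.2⟩, fun U V hUV =>
    f.2 ⟨U.1, U.2.1, le_trans h U.2.2⟩ ⟨V.1, V.2.1, le_trans h V.2.2⟩ hUV⟩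
  map_add' f g := rfl
  map_smul' c f := rfl

end CohFunctor

/-- The Hecke operator `T_U = pr_{τ⁻¹U'τ, U, ⋆} ∘ [τ]_{U', τ⁻¹U'τ, ⋆} ∘ pr^⋆_{U', U}` on
`M(U)`, where `U' = U ∩ τUτ⁻¹`; it is the operator of the double coset `U τ⁻¹ U`. -/
def heckeT {G : Type*} [Group G] {P : Subgroup G → Prop} {S : Set G}
    {A : Type*} [CommRing A] (F : CohFunctor G P S A) (τ : G) (U : Subgroup G) :
    F.M U →ₗ[A] F.M U :=
  (F.push 1 (conjSub τ⁻¹ (U ⊓ conjSub τ U)) U).comp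
    ((F.push τ (U ⊓ conjSub τ U) (conjSub τ⁻¹ (U ⊓ conjSub τ U))).comp
      (F.pull 1 (U ⊓ conjSub τ U) U))

/-- The defining property of the finite pullback `pr^⋆ : M_Iw(K) → M_Iw(K')` (for `K' ≤ K`
compact of finite index), as in Statement 1: it is compatible with the finite-level
pullbacks `pr^⋆_{V',V}` for all shrinking pairs `(V, V')` adapted to `(K, K')`. -/
def IwFinPullSpec {G : Type*} [Group G] {P : Subgroup G → Prop} {S : Set G}
    {A : Type*} [CommRing A] (F : CohFunctor G P S A) (K K' : Subgroup G)
    (fp : F.Iw K →ₗ[A] F.Iw K') : Prop :=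
  ∀ (V V' : Subgroup G) (hV : P V) (hV' : P V') (hKV : K ≤ V) (hK'V' : K' ≤ V'),
    V' ≤ V → V' ⊓ K = K' → V'.relIndex V = K'.relIndex K →
    ∀ f : F.Iw K, (fp f).1 ⟨V', hV', hK'V'⟩ = F.pull 1 V' V (f.1 ⟨V, hV, hKV⟩)

/-- A *pushforward map* `ι_⋆ : M_H → M_G` attached to the closed subgroup `Hsub ⊆ G`:
a family of `A`-linear maps `ι_{V,⋆} : M_H(H ∩ V) → M_G(V)` for the objects `V` of
`𝒫(G, Σ)`, compatible with the pushforwards `[h]_⋆` for `h ∈ H ∩ Σ⁻¹`, and satisfying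
the Cartesian (Mackey) compatibility with pullbacks along the double cosets
`U\V/(V ∩ H)`. -/
structure PushMap {G : Type*} [Group G] {PH PG : Subgroup G → Prop} {SH SG : Set G}
    {A : Type*} [CommRing A] (Hsub : Subgroup G)
    (FH : CohFunctor G PH SH A) (FG : CohFunctor G PG SG A) where
  toFun : ∀ V : Subgroup G, FH.M (Hsub ⊓ V) →ₗ[A] FG.M V
  compat_push : ∀ h : G, h ∈ Hsub → h⁻¹ ∈ SG → h⁻¹ ∈ SH →
    ∀ V V' : Subgroup G, PG V → PG V' → (∀ x ∈ V, h⁻¹ * x * h ∈ V') →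
      (FG.push h V V').comp (toFun V) =
        (toFun V').comp (FH.push h (Hsub ⊓ V) (Hsub ⊓ V'))
  compat_pull : ∀ U V : Subgroup G, PG U → PG V → U ≤ V →
    ∀ R : Finset G, (↑R : Set G) ⊆ (V : Set G) →
      (∀ v ∈ V, ∃ γ ∈ R, ∃ x ∈ U, ∃ h, h ∈ Hsub ∧ h ∈ V ∧ v = x * γ * h) →
      (∀ γ ∈ R, ∀ γ' ∈ R, (∃ x ∈ U, ∃ h, h ∈ Hsub ∧ h ∈ V ∧ γ' = x * γ * h) → γ = γ') →
      (FG.pull 1 U V).comp (toFun V) =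
        ∑ γ ∈ R, ((FG.push γ⁻¹ (conjSub γ⁻¹ U ⊓ V) U).comp
          ((toFun (conjSub γ⁻¹ U ⊓ V)).comp
            (FH.pull 1 (Hsub ⊓ (conjSub γ⁻¹ U ⊓ V)) (Hsub ⊓ V))))

/-- The class `z_U ∈ M_G(U)`: the image of `z ∈ M_{H,Iw}(K)` under the composite of the
finite pullback `M_{H,Iw}(K) → M_{H,Iw}(K ∩ uUu⁻¹)`, the pushforward
`M_{H,Iw}(K ∩ uUu⁻¹) → M_{H,Iw}(H ∩ uUu⁻¹)`, the pushforward map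
`ι_{uUu⁻¹,⋆} : M_{H,Iw}(H ∩ uUu⁻¹) → M_G(uUu⁻¹)`, and the conjugation isomorphism
`[u]_⋆ : M_G(uUu⁻¹) → M_G(U)`. -/
def pushClass {G : Type*} [Group G] {PH PG : Subgroup G → Prop} {SH SG : Set G}
    {A : Type*} [CommRing A] {Hsub : Subgroup G}
    {FH : CohFunctor G PH SH A} {FG : CohFunctor G PG SG A}
    (ι : PushMap Hsub FH FG) (u : G) (K U : Subgroup G)
    (hX : PH (Hsub ⊓ conjSub u U))
    (hKX : K ⊓ conjSub u U ≤ Hsub ⊓ conjSub u U)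
    (fp : FH.Iw K →ₗ[A] FH.Iw (K ⊓ conjSub u U)) (z : FH.Iw K) : FG.M U :=
  FG.push u (conjSub u U) U
    (ι.toFun (conjSub u U)
      (FH.IwProj (Hsub ⊓ conjSub u U) (Hsub ⊓ conjSub u U) hX le_rfl
        (FH.IwRes (K ⊓ conjSub u U) (Hsub ⊓ conjSub u U) hKX (fp z))))


/-!
Conjugating by `u`, everything happens at the levels `X ⊇ X' ⊇ X''` with `X = uUu⁻¹` etc.
Hypothesis (ii) says `X = X' · (K ∩ X)`, so `X'\X/(H ∩ X)` is a single double coset and the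
Mackey compatibility of `ι_⋆` turns `pr^⋆_{X',X} ∘ ι_{X,⋆}` into `ι_{X',⋆} ∘ pr^⋆_{H∩X',H∩X}`.
It remains to compare two Iwasawa classes at level `H ∩ X'`. Choose an open compact subgroup
`N ⊆ X''` normalised by `K` and put `V = K · (H ∩ N)`: for every `Y ⊇ X''` the pair
`(V, V ∩ Y)` is then a shrinking pair for `(K, K ∩ Y)`, so both finite pullbacks are read off at
level `V`. By (i), `V ∩ X' = V ∩ X''`, and the Cartesian property of `M_H` for the single double
coset `(H ∩ X')\(H ∩ X)/(V ∩ X)` identifies the two classes. The Hecke operator statement follows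
by factoring `[τ]_⋆` through `U'`.
-/

open Topology
open scoped Pointwise

section conjSub

variable {G : Type*} [Group G]

theorem mem_conjSub {γ x : G} {U : Subgroup G} : x ∈ conjSub γ U ↔ γ⁻¹ * x * γ ∈ U := by
  simp only [conjSub, Subgroup.mem_map, MulEquiv.coe_toMonoidHom, MulAut.conj_apply]
  constructor
  · rintro ⟨y, hy, rfl⟩
    simpa [mul_assoc] using hy
  · exact fun h => ⟨_, h, by group⟩

theorem conj_mem_conjSub {γ x : G} {U : Subgroup G} (hx : x ∈ U) : γ * x * γ⁻¹ ∈ conjSub γ U :=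
  mem_conjSub.mpr (by simpa [mul_assoc] using hx)

@[simp]
theorem conjSub_one (U : Subgroup G) : conjSub 1 U = U := by
  ext x; simp [mem_conjSub]

theorem conjSub_mono (γ : G) {U V : Subgroup G} (h : U ≤ V) : conjSub γ U ≤ conjSub γ V :=
  fun _ hx => mem_conjSub.mpr (h (mem_conjSub.mp hx))

theorem conjSub_inv_inf_conjSub_le (τ : G) (U : Subgroup G) :
    conjSub τ⁻¹ (U ⊓ conjSub τ U) ≤ U := fun x hx => by
  simpa [mem_conjSub, mul_assoc] using (Subgroup.mem_inf.mp (mem_conjSub.mp hx)).2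

variable [TopologicalSpace G] [IsTopologicalGroup G]

theorem isOpen_conjSub {U : Subgroup G} (h : IsOpen (U : Set G)) (γ : G) :
    IsOpen (conjSub γ U : Set G) := by
  have : (conjSub γ U : Set G) = (fun x => γ⁻¹ * x * γ) ⁻¹' U := Set.ext fun _ => mem_conjSub
  rw [this]
  exact h.preimage (by fun_prop)

theorem isCompact_conjSub {U : Subgroup G} (h : IsCompact (U : Set G)) (γ : G) :
    IsCompact (conjSub γ U : Set G) := by
  rw [conjSub, Subgroup.coe_map]
  exact h.image (IsTopologicalGroup.continuous_conj γ)

end conjSub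

namespace Subgroup

variable {G : Type*} [Group G]

theorem relIndex_eq_relIndex_of_forall_mem_mul {A K V : Subgroup G} (hKV : K ≤ V)
    (h : ∀ v ∈ V, ∃ k ∈ K, ∃ a ∈ A, v = k * a) : A.relIndex V = A.relIndex K := by
  let e := quotientSubgroupOfEmbeddingOfLE A hKV
  refine (Nat.card_congr (Equiv.ofBijective e ⟨e.injective, fun q => ?_⟩)).symm
  obtain ⟨v, rfl⟩ := QuotientGroup.mk_surjective q
  obtain ⟨k, hk, a, ha, hv⟩ := h v v.2
  refine ⟨QuotientGroup.mk ⟨k, hk⟩, ?_⟩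
  rw [quotientSubgroupOfEmbeddingOfLE_apply_mk, QuotientGroup.eq, mem_subgroupOf]
  simpa [hv] using ha

theorem inf_relIndex_eq_inf_relIndex_of_forall_mem_mul {K V Y : Subgroup G} (hKV : K ≤ V)
    (h : ∀ v ∈ V, ∃ k ∈ K, ∃ y ∈ Y, v = k * y) :
    (V ⊓ Y).relIndex V = (K ⊓ Y).relIndex K := by
  have hmul : ∀ v ∈ V, ∃ k ∈ K, ∃ a ∈ V ⊓ Y, v = k * a := fun v hv => by
    obtain ⟨k, hk, y, hy, rfl⟩ := h v hv
    exact ⟨k, hk, y, mem_inf.mpr ⟨by simpa using mul_mem (inv_mem (hKV hk)) hv, hy⟩, rfl⟩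
  rw [relIndex_eq_relIndex_of_forall_mem_mul hKV hmul, ← inf_relIndex_right (V ⊓ Y),
    inf_right_comm, inf_eq_right.mpr hKV]

end Subgroup

theorem exists_isOpen_isCompact_le_normalizer {G : Type*} [Group G] [TopologicalSpace G]
    [IsTopologicalGroup G] [TotallyDisconnectedSpace G] {K C : Subgroup G}
    (hK : IsCompact (K : Set G)) (hCo : IsOpen (C : Set G)) (hCc : IsCompact (C : Set G)) :
    ∃ N : Subgroup G, IsOpen (N : Set G) ∧ IsCompact (N : Set G) ∧ N ≤ C ∧
      K ≤ Subgroup.normalizer (N : Set G) := by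
  -- Tube lemma: a small open subgroup `W` of the profinite group `C` has all its `K`-conjugates
  -- inside `C`, so the subgroup they generate works.
  have hconj : ∀ᶠ x in 𝓝 (1 : G), ∀ k ∈ (K : Set G), k * x * k⁻¹ ∈ C :=
    hK.eventually_forall_of_forall_eventually fun k _ =>
      ((by fun_prop : Continuous fun p : G × G => p.2 * p.1 * p.2⁻¹).tendsto (1, k)).eventually
        (hCo.mem_nhds (by simp))
  have : CompactSpace C := isCompact_iff_compactSpace.mp hCc
  obtain ⟨t, ht, hto, h1t⟩ :=
    eventually_nhds_iff.mp ((continuous_subtype_val.tendsto (1 : C)).eventually hconj)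
  obtain ⟨N₀, hN₀t⟩ := ProfiniteGrp.exist_openNormalSubgroup_sub_open_nhds_of_one hto h1t
  set W := N₀.toSubgroup.map C.subtype
  have hWo : IsOpen (W : Set G) := by
    rw [Subgroup.coe_map]; exact hCo.isOpenMap_subtype_val _ N₀.isOpen
  set N := Subgroup.closure {y | ∃ k ∈ K, ∃ w ∈ W, y = k * w * k⁻¹}
  have hWN : W ≤ N := fun w hw => Subgroup.subset_closure ⟨1, K.one_mem, w, hw, by simp⟩
  have hNC : N ≤ C := by
    rw [Subgroup.closure_le]
    rintro _ ⟨k, hk, _, ⟨c, hc, rfl⟩, rfl⟩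
    exact ht c (hN₀t hc) k hk
  have hNo : IsOpen (N : Set G) := Subgroup.isOpen_mono hWN hWo
  refine ⟨N, hNo, hCc.of_isClosed_subset (Subgroup.isClosed_of_isOpen _ hNo) hNC, hNC, ?_⟩
  rw [Subgroup.le_normalizer_closure_iff]
  rintro k hk _ ⟨k', hk', w, hw, rfl⟩
  exact Subgroup.subset_closure ⟨k * k', mul_mem hk hk', w, hw, by group⟩

section Levels

variable {G : Type*} [Group G] [TopologicalSpace G]
  (Sig : Submonoid G) (H : Subgroup G)

/-- The objects of `𝒫(G, Σ)`. -/
abbrev IsOpenCompactWithin (U : Subgroup G) : Prop :=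
  IsOpen (U : Set G) ∧ IsCompact (U : Set G) ∧ (U : Set G) ⊆ Sig

/-- The objects of `𝒫(H, Σ ∩ H)`. -/
abbrev IsRelOpenCompactWithin (X : Subgroup G) : Prop :=
  X ≤ H ∧ IsCompact (X : Set G) ∧ (∃ O : Set G, IsOpen O ∧ (X : Set G) = O ∩ H) ∧
    (X : Set G) ⊆ (Sig : Set G) ∩ H

variable {Sig H}

theorem IsOpenCompactWithin.conjSub [IsTopologicalGroup G] {U : Subgroup G}
    (hU : IsOpenCompactWithin Sig U) (γ : G) (hγU : (_root_.conjSub γ U : Set G) ⊆ Sig) :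
    IsOpenCompactWithin Sig (_root_.conjSub γ U) :=
  ⟨isOpen_conjSub hU.1 γ, isCompact_conjSub hU.2.1 γ, hγU⟩

theorem IsOpenCompactWithin.inf_left (hH : IsClosed (H : Set G)) {Y : Subgroup G}
    (hY : IsOpenCompactWithin Sig Y) : IsRelOpenCompactWithin Sig H (H ⊓ Y) := by
  refine ⟨inf_le_left, ?_, ⟨Y, hY.1, by rw [Subgroup.coe_inf, Set.inter_comm]⟩, ?_⟩
  · rw [Subgroup.coe_inf]
    exact hY.2.1.inter_left hH
  · exact fun x hx => ⟨hY.2.2 hx.2, hx.1⟩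

theorem IsRelOpenCompactWithin.inf_right [IsTopologicalGroup G] {V : Subgroup G}
    (hV : IsRelOpenCompactWithin Sig H V) {Y : Subgroup G} (hY : IsOpen (Y : Set G)) :
    IsRelOpenCompactWithin Sig H (V ⊓ Y) := by
  obtain ⟨hVH, hVc, ⟨O, hO, hVO⟩, hVSig⟩ := hV
  refine ⟨inf_le_left.trans hVH, ?_, ⟨O ∩ Y, hO.inter hY, ?_⟩, fun x hx => hVSig hx.1⟩
  · rw [Subgroup.coe_inf]
    exact hVc.inter_right (Subgroup.isClosed_of_isOpen _ hY)
  · rw [Subgroup.coe_inf, hVO, Set.inter_right_comm]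

theorem exists_isRelOpenCompactWithin_eq_mul [IsTopologicalGroup G] [TotallyDisconnectedSpace G]
    (hH : IsClosed (H : Set G)) {K C : Subgroup G} (hKH : K ≤ H) (hK : IsCompact (K : Set G))
    (hKSig : (K : Set G) ⊆ Sig) (hC : IsOpenCompactWithin Sig C) :
    ∃ V : Subgroup G, IsRelOpenCompactWithin Sig H V ∧ K ≤ V ∧
      ∀ v ∈ V, ∃ k ∈ K, ∃ c ∈ C, v = k * c := by
  obtain ⟨N, hNo, hNc, hNC, hKN⟩ := exists_isOpen_isCompact_le_normalizer hK hC.1 hC.2.1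
  have hKM : K ≤ Subgroup.normalizer ((H ⊓ N : Subgroup G) : Set G) :=
    (le_inf (hKH.trans Subgroup.le_normalizer) hKN).trans Subgroup.inf_normalizer_le_normalizer_inf
  have hV := Subgroup.coe_mul_of_left_le_normalizer_right K (H ⊓ N) hKM
  have hVH : K ⊔ (H ⊓ N) ≤ H := sup_le hKH inf_le_left
  refine ⟨K ⊔ (H ⊓ N), ⟨hVH, ?_, ⟨((K ⊔ (H ⊓ N) : Subgroup G) : Set G) * (N : Set G),
    hNo.mul_left, ?_⟩, ?_⟩, le_sup_left, ?_⟩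
  · rw [hV, Subgroup.coe_inf]
    exact hK.mul (hNc.inter_left hH)
  · ext x
    refine ⟨fun hx => ⟨⟨x, hx, 1, N.one_mem, mul_one x⟩, hVH hx⟩, ?_⟩
    rintro ⟨⟨v, hv, n, hn, rfl⟩, hx⟩
    have hnH : n ∈ H := by simpa using mul_mem (inv_mem (hVH hv)) hx
    exact mul_mem hv (le_sup_right (a := K) (Subgroup.mem_inf.mpr ⟨hnH, hn⟩))
  · rw [hV]
    rintro _ ⟨k, hk, m, hm, rfl⟩
    exact ⟨mul_mem (hKSig hk) (hC.2.2 (hNC hm.2)), mul_mem (hKH hk) hm.1⟩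
  · intro v hv
    rw [← SetLike.mem_coe, hV] at hv
    obtain ⟨k, hk, m, hm, rfl⟩ := hv
    exact ⟨k, hk, m, hNC hm.2, rfl⟩

end Levels

namespace CohFunctor

variable {G : Type*} [Group G] {P : Subgroup G → Prop} {S : Set G} {A : Type*} [CommRing A]
  (F : CohFunctor G P S A)

theorem pull_one_comp_pull_one (h1 : (1 : G) ∈ S) {U V W : Subgroup G} (hU : P U) (hV : P V)
    (hW : P W) (hUV : U ≤ V) (hVW : V ≤ W) :
    (F.pull 1 U V).comp (F.pull 1 V W) = F.pull 1 U W := by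
  simpa using F.pull_comp 1 1 U V W hU hV hW h1 h1 (fun x hx => by simpa using hUV hx)
    (fun x hx => by simpa using hVW hx)

theorem push_conj_eq_pull_inv {u : G} (hu : u⁻¹ ∈ S) {U : Subgroup G} (hU : P U)
    (hcU : P (conjSub u U)) : F.push u (conjSub u U) U = F.pull u⁻¹ U (conjSub u U) := by
  simpa using (F.pull_eq_push u⁻¹ U (conjSub u U) hU hcU hu (by rw [inv_inv])).symm

theorem push_one_comp_push_conj (h1 : (1 : G) ∈ S) {u : G} (hu : u⁻¹ ∈ S) {U V : Subgroup G}
    (hU : P U) (hV : P V) (hcU : P (conjSub u U)) (hcV : P (conjSub u V)) (hUV : U ≤ V) :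
    (F.push 1 U V).comp (F.push u (conjSub u U) U) =
      (F.push u (conjSub u V) V).comp (F.push 1 (conjSub u U) (conjSub u V)) := by
  rw [F.push_comp u 1 _ U V hcU hU hV hu (by simpa using h1) (fun x hx => mem_conjSub.mp hx)
      (fun x hx => by simpa using hUV hx),
    F.push_comp 1 u _ _ V hcU hcV hV (by simpa using h1) hu
      (fun x hx => by simpa using conjSub_mono u hUV hx) (fun x hx => mem_conjSub.mp hx),
    mul_one, one_mul]

theorem pull_one_comp_push_conj (h1 : (1 : G) ∈ S) {u : G} (hu : u⁻¹ ∈ S) {U V : Subgroup G}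
    (hU : P U) (hV : P V) (hcU : P (conjSub u U)) (hcV : P (conjSub u V)) (hUV : U ≤ V) :
    (F.pull 1 U V).comp (F.push u (conjSub u V) V) =
      (F.push u (conjSub u U) U).comp (F.pull 1 (conjSub u U) (conjSub u V)) := by
  rw [F.push_conj_eq_pull_inv hu hU hcU, F.push_conj_eq_pull_inv hu hV hcV,
    F.pull_comp 1 u⁻¹ U V _ hU hV hcV h1 hu (fun x hx => by simpa using hUV hx)
      (fun x hx => by simpa using conj_mem_conjSub (γ := u) hx),
    F.pull_comp u⁻¹ 1 U _ _ hU hcU hcV hu h1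
      (fun x hx => by simpa using conj_mem_conjSub (γ := u) hx)
      (fun x hx => by simpa using conjSub_mono u hUV hx),
    mul_one, one_mul]

theorem push_eq_heckeT_apply (h1 : (1 : G) ∈ S) {τ : G} (hτ : τ⁻¹ ∈ S) {U U'' : Subgroup G}
    (hU : P U) (hU'' : P U'') (hU' : P (U ⊓ conjSub τ U))
    (hτU' : P (conjSub τ⁻¹ (U ⊓ conjSub τ U))) (hU''U' : U'' ≤ U ⊓ conjSub τ U)
    {a : F.M U''} {b : F.M U}
    (h : F.push 1 U'' (U ⊓ conjSub τ U) a = F.pull 1 (U ⊓ conjSub τ U) U b) :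
    F.push τ U'' U a = heckeT F τ U b := by
  have hconj : ∀ x ∈ U ⊓ conjSub τ U, τ⁻¹ * x * τ ∈ conjSub τ⁻¹ (U ⊓ conjSub τ U) :=
    fun x hx => by simpa using conj_mem_conjSub (γ := τ⁻¹) hx
  have e₁ := F.push_comp 1 τ U'' _ _ hU'' hU' hτU' (by simpa using h1) hτ
    (fun x hx => by simpa using hU''U' hx) hconj
  have e₂ := F.push_comp τ 1 U'' _ U hU'' hτU' hU hτ (by simpa using h1)
    (fun x hx => hconj x (hU''U' hx))
    (fun x hx => by simpa using conjSub_inv_inf_conjSub_le τ U hx)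
  rw [one_mul] at e₁
  rw [mul_one] at e₂
  rw [← e₂, LinearMap.comp_apply, ← e₁, LinearMap.comp_apply, h]
  rfl

theorem eq_zero_of_forall_not_le {K : Subgroup G} (f : F.Iw K) (h : ∀ U, P U → ¬K ≤ U) :
    f = 0 :=
  Subtype.ext (funext fun U => (h U.1 U.2.1 U.2.2).elim)

theorem IsCartesian.pull_comp_push_of_forall_mem_mul {F : CohFunctor G P S A}
    (hF : F.IsCartesian) {U U' V : Subgroup G} (hU : P U) (hU' : P U') (hV : P V) (hUV : U ≤ V)
    (hU'V : U' ≤ V) (hmul : ∀ v ∈ V, ∃ x ∈ U, ∃ y ∈ U', v = x * y) :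
    (F.pull 1 U V).comp (F.push 1 U' V) =
      (F.push 1 (U' ⊓ U) U).comp (F.pull 1 (U' ⊓ U) U') := by
  have := hF U U' V hU hU' hV hUV hU'V {1} (by simp [V.one_mem])
    (fun v hv => by simpa using hmul v hv)
    (fun γ hγ γ' hγ' _ => (Finset.mem_singleton.mp hγ).trans (Finset.mem_singleton.mp hγ').symm)
  rwa [Finset.sum_singleton, conjSub_one] at this

theorem IsCartesian.pull_apply_eq_of_forall_mem_mul {F : CohFunctor G P S A}
    (hF : F.IsCartesian) {K₁ K₂ V₁ V₂ W W' : Subgroup G}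
    (z₁ : F.Iw K₁) (z₂ : F.Iw K₂) (hV₁ : P V₁) (hV₂ : P V₂) (hW : P W) (hW' : P W')
    (hK₁V₁ : K₁ ≤ V₁) (hK₂V₂ : K₂ ≤ V₂) (hV₁W : V₁ ≤ W) (hV₂W' : V₂ ≤ W') (hW'W : W' ≤ W)
    (hinf : V₁ ⊓ W' = V₂) (hmul : ∀ w ∈ W, ∃ x ∈ W', ∃ y ∈ V₁, w = x * y)
    (hz : z₂.1 ⟨V₂, hV₂, hK₂V₂⟩ = F.pull 1 V₂ V₁ (z₁.1 ⟨V₁, hV₁, hK₁V₁⟩)) :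
    F.pull 1 W' W (z₁.1 ⟨W, hW, hK₁V₁.trans hV₁W⟩) = z₂.1 ⟨W', hW', hK₂V₂.trans hV₂W'⟩ := by
  have hz₁ := z₁.2 ⟨V₁, hV₁, hK₁V₁⟩ ⟨W, hW, hK₁V₁.trans hV₁W⟩ hV₁W
  have hz₂ := z₂.2 ⟨V₂, hV₂, hK₂V₂⟩ ⟨W', hW', hK₂V₂.trans hV₂W'⟩ hV₂W'
  rw [← hz₁, ← hz₂, hz, ← LinearMap.comp_apply,
    hF.pull_comp_push_of_forall_mem_mul hW' hV₁ hW hW'W hV₁W hmul, hinf,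
    LinearMap.comp_apply]

end CohFunctor

theorem PushMap.pull_comp_toFun_of_forall_mem_mul {G : Type*} [Group G]
    {PH PG : Subgroup G → Prop} {SH SG : Set G} {A : Type*} [CommRing A] {Hsub : Subgroup G}
    {FH : CohFunctor G PH SH A} {FG : CohFunctor G PG SG A} (ι : PushMap Hsub FH FG)
    {U V : Subgroup G} (hU : PG U) (hV : PG V) (hUV : U ≤ V)
    (hmul : ∀ v ∈ V, ∃ x ∈ U, ∃ h ∈ Hsub ⊓ V, v = x * h) :
    (FG.pull 1 U V).comp (ι.toFun V) = (ι.toFun U).comp (FH.pull 1 (Hsub ⊓ U) (Hsub ⊓ V)) := by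
  have := ι.compat_pull U V hU hV hUV {1} (by simp [V.one_mem])
    (fun v hv => by simpa [and_assoc] using hmul v hv)
    (fun γ hγ γ' hγ' _ => (Finset.mem_singleton.mp hγ).trans (Finset.mem_singleton.mp hγ').symm)
  rwa [Finset.sum_singleton, inv_one, conjSub_one, inf_eq_left.mpr hUV, FG.push_id U hU,
    LinearMap.id_comp] at this

theorem pushClass_eq_push_toFun {G : Type*} [Group G] {PH PG : Subgroup G → Prop}
    {SH SG : Set G} {A : Type*} [CommRing A] {Hsub : Subgroup G}
    {FH : CohFunctor G PH SH A} {FG : CohFunctor G PG SG A}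
    (ι : PushMap Hsub FH FG) (u : G) (K U : Subgroup G) (hX : PH (Hsub ⊓ conjSub u U))
    (hKX : K ⊓ conjSub u U ≤ Hsub ⊓ conjSub u U)
    (fp : FH.Iw K →ₗ[A] FH.Iw (K ⊓ conjSub u U)) (z : FH.Iw K) :
    pushClass ι u K U hX hKX fp z =
      FG.push u (conjSub u U) U
        (ι.toFun (conjSub u U) ((fp z).1 ⟨Hsub ⊓ conjSub u U, hX, hKX⟩)) :=
  rfl

section PushClass

variable {G : Type*} [Group G] [TopologicalSpace G] [IsTopologicalGroup G]
  {A : Type*} [CommRing A] {Sig : Submonoid G} {Hsub : Subgroup G}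
  {FH : CohFunctor G (IsRelOpenCompactWithin Sig Hsub) ((Sig : Set G) ∩ Hsub) A}
  {FG : CohFunctor G (IsOpenCompactWithin Sig) Sig A}

theorem push_one_pushClass (ι : PushMap Hsub FH FG) (hHcl : IsClosed (Hsub : Set G)) {u : G}
    (hu : u⁻¹ ∈ Sig) {K U' U'' : Subgroup G} (hKH : K ≤ Hsub)
    (hU' : IsOpenCompactWithin Sig U') (hU'' : IsOpenCompactWithin Sig U'') (hU''U' : U'' ≤ U')
    (hcU' : (conjSub u U' : Set G) ⊆ Sig) (hcU'' : (conjSub u U'' : Set G) ⊆ Sig)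
    (hXU'' : IsRelOpenCompactWithin Sig Hsub (Hsub ⊓ conjSub u U''))
    (fp : FH.Iw K →ₗ[A] FH.Iw (K ⊓ conjSub u U'')) (z : FH.Iw K) :
    FG.push 1 U'' U' (pushClass ι u K U'' hXU'' (inf_le_inf_right _ hKH) fp z) =
      FG.push u (conjSub u U') U' (ι.toFun (conjSub u U')
        ((fp z).1 ⟨Hsub ⊓ conjSub u U', (hU'.conjSub u hcU').inf_left hHcl,
          inf_le_inf hKH (conjSub_mono u hU''U')⟩)) := by
  have hX' := hU'.conjSub u hcU'
  have hX'' := hU''.conjSub u hcU''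
  rw [pushClass_eq_push_toFun, ← LinearMap.comp_apply,
    FG.push_one_comp_push_conj Sig.one_mem hu hU'' hU' hX'' hX' hU''U', LinearMap.comp_apply,
    ← LinearMap.comp_apply (FG.push 1 _ _),
    ι.compat_push 1 Hsub.one_mem (by simp) (by simp) _ _ hX''
      hX' (fun x hx => by simpa using conjSub_mono u hU''U' hx),
    LinearMap.comp_apply, (fp z).2 ⟨Hsub ⊓ conjSub u U'', hXU'', inf_le_inf_right _ hKH⟩
      ⟨Hsub ⊓ conjSub u U', hX'.inf_left hHcl, inf_le_inf hKH (conjSub_mono u hU''U')⟩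
      (inf_le_inf_left Hsub (conjSub_mono u hU''U'))]

theorem pull_one_pushClass (ι : PushMap Hsub FH FG) {u : G} (hu : u⁻¹ ∈ Sig)
    {K U U' : Subgroup G} (hKH : K ≤ Hsub)
    (hU : IsOpenCompactWithin Sig U) (hU' : IsOpenCompactWithin Sig U') (hU'U : U' ≤ U)
    (hcU : (conjSub u U : Set G) ⊆ Sig)
    (hcover : ∀ x ∈ conjSub u U, ∃ x' ∈ conjSub u U', ∃ k ∈ K, x = x' * k)
    (hXU : IsRelOpenCompactWithin Sig Hsub (Hsub ⊓ conjSub u U))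
    (fp : FH.Iw K →ₗ[A] FH.Iw (K ⊓ conjSub u U)) (z : FH.Iw K) :
    FG.pull 1 U' U (pushClass ι u K U hXU (inf_le_inf_right _ hKH) fp z) =
      FG.push u (conjSub u U') U' (ι.toFun (conjSub u U')
        (FH.pull 1 (Hsub ⊓ conjSub u U') (Hsub ⊓ conjSub u U)
          ((fp z).1 ⟨Hsub ⊓ conjSub u U, hXU, inf_le_inf_right _ hKH⟩))) := by
  have hX := hU.conjSub u hcU
  have hX' := hU'.conjSub u fun x hx => hcU (conjSub_mono u hU'U hx)
  have hmul : ∀ x ∈ conjSub u U, ∃ x' ∈ conjSub u U', ∃ h ∈ Hsub ⊓ conjSub u U, x = x' * h := by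
    intro x hx
    obtain ⟨x', hx', k, hk, rfl⟩ := hcover x hx
    refine ⟨x', hx', k, ⟨hKH hk, ?_⟩, rfl⟩
    simpa using mul_mem (inv_mem (conjSub_mono u hU'U hx')) hx
  rw [pushClass_eq_push_toFun, ← LinearMap.comp_apply,
    FG.pull_one_comp_push_conj Sig.one_mem hu hU' hU hX' hX hU'U, LinearMap.comp_apply,
    ← LinearMap.comp_apply (FG.pull 1 _ _),
    ι.pull_comp_toFun_of_forall_mem_mul hX' hX (conjSub_mono u hU'U) hmul, LinearMap.comp_apply]

theorem finPull_apply_inf_eq_pull {K V X X'' : Subgroup G}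
    (hV : IsRelOpenCompactWithin Sig Hsub V) (hKV : K ≤ V) (hX : IsOpen (X : Set G))
    (hX'' : IsOpen (X'' : Set G)) (hX''X : X'' ≤ X)
    (hVmul : ∀ v ∈ V, ∃ k ∈ K, ∃ c ∈ X'', v = k * c)
    {fp : FH.Iw K →ₗ[A] FH.Iw (K ⊓ X)} (hfp : IwFinPullSpec FH K (K ⊓ X) fp)
    {fp'' : FH.Iw K →ₗ[A] FH.Iw (K ⊓ X'')} (hfp'' : IwFinPullSpec FH K (K ⊓ X'') fp'')
    (z : FH.Iw K) :
    (fp'' z).1 ⟨V ⊓ X'', hV.inf_right hX'', inf_le_inf_right X'' hKV⟩ =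
      FH.pull 1 (V ⊓ X'') (V ⊓ X) ((fp z).1 ⟨V ⊓ X, hV.inf_right hX, inf_le_inf_right X hKV⟩) := by
  have hshrink : ∀ Y, X'' ≤ Y → (V ⊓ Y).relIndex V = (K ⊓ Y).relIndex K := fun Y hY =>
    Subgroup.inf_relIndex_eq_inf_relIndex_of_forall_mem_mul hKV fun v hv => by
      obtain ⟨k, hk, c, hc, rfl⟩ := hVmul v hv
      exact ⟨k, hk, c, hY hc, rfl⟩
  have hVK : ∀ Y, V ⊓ Y ⊓ K = K ⊓ Y := fun Y => by rw [inf_right_comm, inf_eq_right.mpr hKV]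
  rw [hfp'' V _ hV (hV.inf_right hX'') hKV (inf_le_inf_right X'' hKV) inf_le_left (hVK X'')
      (hshrink X'' le_rfl),
    hfp V _ hV (hV.inf_right hX) hKV (inf_le_inf_right X hKV) inf_le_left (hVK X)
      (hshrink X hX''X), ← LinearMap.comp_apply,
    FH.pull_one_comp_pull_one ⟨Sig.one_mem, Hsub.one_mem⟩ (hV.inf_right hX'') (hV.inf_right hX)
      hV (inf_le_inf_left V hX''X) inf_le_left]

theorem pull_finPull_apply_eq [TotallyDisconnectedSpace G] (hHcl : IsClosed (Hsub : Set G))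
    (hFH : FH.IsCartesian) {K X X' X'' : Subgroup G} (hKH : K ≤ Hsub)
    (hK : IsCompact (K : Set G)) (hKSig : (K : Set G) ⊆ Sig) (hX : IsOpenCompactWithin Sig X)
    (hX' : IsOpenCompactWithin Sig X') (hX'' : IsOpenCompactWithin Sig X'')
    (hX''X' : X'' ≤ X') (hX'X : X' ≤ X)
    {fp : FH.Iw K →ₗ[A] FH.Iw (K ⊓ X)} (hfp : IwFinPullSpec FH K (K ⊓ X) fp)
    {fp'' : FH.Iw K →ₗ[A] FH.Iw (K ⊓ X'')} (hfp'' : IwFinPullSpec FH K (K ⊓ X'') fp'')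
    (hi : K ⊓ X'' = K ⊓ X') (hcover : ∀ x ∈ X, ∃ x' ∈ X', ∃ k ∈ K, x = x' * k) (z : FH.Iw K) :
    FH.pull 1 (Hsub ⊓ X') (Hsub ⊓ X)
        ((fp z).1 ⟨Hsub ⊓ X, hX.inf_left hHcl, inf_le_inf_right X hKH⟩) =
      (fp'' z).1 ⟨Hsub ⊓ X', hX'.inf_left hHcl, inf_le_inf hKH hX''X'⟩ := by
  obtain ⟨V, hV, hKV, hVmul⟩ := exists_isRelOpenCompactWithin_eq_mul hHcl hKH hK hKSig hX''
  have hVX' : V ⊓ X' = V ⊓ X'' := by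
    refine le_antisymm (fun x hx => ?_) (inf_le_inf_left V hX''X')
    obtain ⟨hxV, hxX'⟩ := Subgroup.mem_inf.mp hx
    refine Subgroup.mem_inf.mpr ⟨hxV, ?_⟩
    obtain ⟨k, hk, c, hc, rfl⟩ := hVmul x hxV
    have hkX' : k ∈ X' := by simpa using mul_mem hxX' (inv_mem (hX''X' hc))
    have hkX'' : k ∈ K ⊓ X'' := hi ▸ ⟨hk, hkX'⟩
    exact mul_mem hkX''.2 hc
  refine hFH.pull_apply_eq_of_forall_mem_mul (fp z) (fp'' z)
    (hV.inf_right hX.1) (hV.inf_right hX''.1) (hX.inf_left hHcl) (hX'.inf_left hHcl)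
    (inf_le_inf_right X hKV) (inf_le_inf_right X'' hKV) (inf_le_inf_right X hV.1)
    (inf_le_inf hV.1 hX''X') (inf_le_inf_left Hsub hX'X) ?_ ?_ ?_
  · rw [← hVX']
    exact le_antisymm (fun x hx => ⟨hx.1.1, hx.2.2⟩)
      (fun x hx => ⟨⟨hx.1, hX'X hx.2⟩, hV.1 hx.1, hx.2⟩)
  · intro w hw
    obtain ⟨hwH, hwX⟩ := Subgroup.mem_inf.mp hw
    obtain ⟨x', hx', k, hk, rfl⟩ := hcover w hwX
    refine ⟨x', Subgroup.mem_inf.mpr ⟨?_, hx'⟩, k, Subgroup.mem_inf.mpr ⟨hKV hk, ?_⟩, rfl⟩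
    · simpa using mul_mem hwH (inv_mem (hKH hk))
    · simpa using mul_mem (inv_mem (hX'X hx')) hwX
  · exact finPull_apply_inf_eq_pull hV hKV hX.1 hX''.1 (hX''X'.trans hX'X) hVmul hfp hfp'' z

end PushClass

theorem stmt_8_general {G : Type*} [Group G] [TopologicalSpace G] [IsTopologicalGroup G]
    [TotallyDisconnectedSpace G]
    {A : Type*} [CommRing A]
    (Sig : Submonoid G)
    (Hsub : Subgroup G) (hHcl : IsClosed (Hsub : Set G))
    -- the Cartesian cohomology functor for (H, Σ ∩ H)
    (FH : CohFunctor G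
      (fun X => X ≤ Hsub ∧ IsCompact (X : Set G) ∧
        (∃ O : Set G, IsOpen O ∧ (X : Set G) = O ∩ (Hsub : Set G)) ∧
        (X : Set G) ⊆ (Sig : Set G) ∩ (Hsub : Set G))
      ((Sig : Set G) ∩ (Hsub : Set G)) A)
    -- the Cartesian cohomology functor for (G, Σ)
    (FG : CohFunctor G
      (fun U => IsOpen (U : Set G) ∧ IsCompact (U : Set G) ∧ (U : Set G) ⊆ (Sig : Set G))
      (Sig : Set G) A)
    (hFH : FH.IsCartesian)
    (ι : PushMap Hsub FH FG)
    (u : G) (huinv : u⁻¹ ∈ Sig)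
    (K : Subgroup G) (hKH : K ≤ Hsub) (hKcpt : IsCompact (K : Set G))
    (z : FH.Iw K)
    -- the three levels U'' ⊆ U' ⊆ U
    (U U' U'' : Subgroup G)
    (hU : IsOpen (U : Set G) ∧ IsCompact (U : Set G) ∧ (U : Set G) ⊆ (Sig : Set G))
    (hU' : IsOpen (U' : Set G) ∧ IsCompact (U' : Set G) ∧ (U' : Set G) ⊆ (Sig : Set G))
    (hU'' : IsOpen (U'' : Set G) ∧ IsCompact (U'' : Set G) ∧ (U'' : Set G) ⊆ (Sig : Set G))
    (hU''U' : U'' ≤ U') (hU'U : U' ≤ U)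
    (hconjU : ((conjSub u U : Subgroup G) : Set G) ⊆ (Sig : Set G))
    (hconjU'' : ((conjSub u U'' : Subgroup G) : Set G) ⊆ (Sig : Set G))
    (hXU : (Hsub ⊓ conjSub u U) ≤ Hsub ∧ IsCompact ((Hsub ⊓ conjSub u U : Subgroup G) : Set G) ∧
      (∃ O : Set G, IsOpen O ∧ ((Hsub ⊓ conjSub u U : Subgroup G) : Set G) = O ∩ (Hsub : Set G)) ∧
      ((Hsub ⊓ conjSub u U : Subgroup G) : Set G) ⊆ (Sig : Set G) ∩ (Hsub : Set G))
    (hXU'' : (Hsub ⊓ conjSub u U'') ≤ Hsub ∧ IsCompact ((Hsub ⊓ conjSub u U'' : Subgroup G) : Set G) ∧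
      (∃ O : Set G, IsOpen O ∧ ((Hsub ⊓ conjSub u U'' : Subgroup G) : Set G) = O ∩ (Hsub : Set G)) ∧
      ((Hsub ⊓ conjSub u U'' : Subgroup G) : Set G) ⊆ (Sig : Set G) ∩ (Hsub : Set G))
    -- the finite pullback maps on Iwasawa cohomology (unique, by Statement 1)
    (fpU : FH.Iw K →ₗ[A] FH.Iw (K ⊓ conjSub u U))
    (hfpU : IwFinPullSpec FH K (K ⊓ conjSub u U) fpU)
    (fpU'' : FH.Iw K →ₗ[A] FH.Iw (K ⊓ conjSub u U''))
    (hfpU'' : IwFinPullSpec FH K (K ⊓ conjSub u U'') fpU'')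
    -- hypothesis (i)
    (hi : K ⊓ conjSub u U'' = K ⊓ conjSub u U')
    -- hypothesis (ii)
    (R : Finset G) (hRmem : ∀ γ ∈ R, u * γ * u⁻¹ ∈ K ∧ γ ∈ U)
    (hRcover : ∀ v ∈ U, ∃! γ, γ ∈ R ∧ v * γ⁻¹ ∈ U') :
    FG.push 1 U'' U'
        (pushClass ι u K U'' hXU'' (inf_le_inf_right _ hKH) fpU'' z) =
      FG.pull 1 U' U (pushClass ι u K U hXU (inf_le_inf_right _ hKH) fpU z) ∧
    (∀ τ : G, τ⁻¹ ∈ Sig → U' = U ⊓ conjSub τ U → (∀ x ∈ U'', τ⁻¹ * x * τ ∈ U) →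
      FG.push τ U'' U (pushClass ι u K U'' hXU'' (inf_le_inf_right _ hKH) fpU'' z) =
        heckeT FG τ U (pushClass ι u K U hXU (inf_le_inf_right _ hKH) fpU z)) := by
  by_cases hKSig : (K : Set G) ⊆ Sig
  swap
  · obtain rfl : z = 0 := FH.eq_zero_of_forall_not_le z fun V hV hKV =>
      hKSig fun k hk => (hV.2.2.2 (hKV hk)).1
    simp [pushClass]
  have hcU' : (conjSub u U' : Set G) ⊆ Sig := fun x hx => hconjU (conjSub_mono u hU'U hx)
  have hcover : ∀ x ∈ conjSub u U, ∃ x' ∈ conjSub u U', ∃ k ∈ K, x = x' * k := by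
    intro x hx
    obtain ⟨γ, ⟨hγR, hγ⟩, -⟩ := hRcover _ (mem_conjSub.mp hx)
    refine ⟨x * (u * γ * u⁻¹)⁻¹, mem_conjSub.mpr ?_, u * γ * u⁻¹, (hRmem γ hγR).1, by group⟩
    convert hγ using 1
    group
  have h₁ : FG.push 1 U'' U' (pushClass ι u K U'' hXU'' (inf_le_inf_right _ hKH) fpU'' z) =
      FG.pull 1 U' U (pushClass ι u K U hXU (inf_le_inf_right _ hKH) fpU z) := by
    rw [push_one_pushClass ι hHcl huinv hKH hU' hU'' hU''U' hcU' hconjU'',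
      pull_one_pushClass ι huinv hKH hU hU' hU'U hconjU hcover,
      pull_finPull_apply_eq hHcl hFH hKH hKcpt hKSig (IsOpenCompactWithin.conjSub hU u hconjU)
        (IsOpenCompactWithin.conjSub hU' u hcU') (IsOpenCompactWithin.conjSub hU'' u hconjU'')
        (conjSub_mono u hU''U') (conjSub_mono u hU'U) hfpU hfpU'' hi hcover]
  refine ⟨h₁, fun τ hτ hτU' _ => ?_⟩
  subst hτU'
  exact FG.push_eq_heckeT_apply Sig.one_mem hτ hU hU'' hU'
    ⟨isOpen_conjSub hU'.1 τ⁻¹, isCompact_conjSub hU'.2.1 τ⁻¹,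
      fun x hx => hU.2.2 (conjSub_inv_inf_conjSub_le τ U hx)⟩ hU''U' h₁

/-- vertical norm-compatibility, finite level.  With notation as in the
paper: `ι : H ↪ G` a closed subgroup, `M_H`, `M_G` Cartesian cohomology functors,
`ι_⋆ : M_H → M_G` a pushforward map, `u ∈ G`, `K ⊆ H` compact, `z ∈ M_{H,Iw}(K)`, and
`U'' ⊆ U' ⊆ U` open compact subgroups of `G` contained in `Σ` with
(i) `K ∩ uU''u⁻¹ = K ∩ uU'u⁻¹`; and
(ii) a finite set `R ⊆ (u⁻¹Ku) ∩ U` of representatives with `U = ⨆_{γ ∈ R} U'γ` and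
`[K ∩ uUu⁻¹ : K ∩ uU'u⁻¹] = [U : U']`.
Then `pr_{U'',U',⋆}(z_{U''}) = pr^⋆_{U',U}(z_U)`; and consequently, if `τ ∈ Σ⁻¹` satisfies
`U' = U ∩ τUτ⁻¹` and `τ⁻¹U''τ ⊆ U`, then `[τ]_{U'',U,⋆}(z_{U''}) = T_U(z_U)` for the
Hecke operator `T_U` of the double coset `Uτ⁻¹U`. -/
theorem stmt_8 {G : Type*} [Group G] [TopologicalSpace G] [IsTopologicalGroup G]
    [LocallyCompactSpace G] [T2Space G] [TotallyDisconnectedSpace G]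
    {A : Type*} [CommRing A]
    (Sig : Submonoid G) (hSig : IsOpen (Sig : Set G))
    (Hsub : Subgroup G) (hHcl : IsClosed (Hsub : Set G))
    -- the Cartesian cohomology functor for (H, Σ ∩ H)
    (FH : CohFunctor G
      (fun X => X ≤ Hsub ∧ IsCompact (X : Set G) ∧
        (∃ O : Set G, IsOpen O ∧ (X : Set G) = O ∩ (Hsub : Set G)) ∧
        (X : Set G) ⊆ (Sig : Set G) ∩ (Hsub : Set G))
      ((Sig : Set G) ∩ (Hsub : Set G)) A)
    -- the Cartesian cohomology functor for (G, Σ)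
    (FG : CohFunctor G
      (fun U => IsOpen (U : Set G) ∧ IsCompact (U : Set G) ∧ (U : Set G) ⊆ (Sig : Set G))
      (Sig : Set G) A)
    (hFH : FH.IsCartesian) (hFG : FG.IsCartesian)
    (ι : PushMap Hsub FH FG)
    (u : G) (hu : u ∈ Sig) (huinv : u⁻¹ ∈ Sig)
    (K : Subgroup G) (hKH : K ≤ Hsub) (hKcpt : IsCompact (K : Set G))
    (z : FH.Iw K)
    -- the three levels U'' ⊆ U' ⊆ U
    (U U' U'' : Subgroup G)
    (hU : IsOpen (U : Set G) ∧ IsCompact (U : Set G) ∧ (U : Set G) ⊆ (Sig : Set G))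
    (hU' : IsOpen (U' : Set G) ∧ IsCompact (U' : Set G) ∧ (U' : Set G) ⊆ (Sig : Set G))
    (hU'' : IsOpen (U'' : Set G) ∧ IsCompact (U'' : Set G) ∧ (U'' : Set G) ⊆ (Sig : Set G))
    (hU''U' : U'' ≤ U') (hU'U : U' ≤ U)
    (hconjU : ((conjSub u U : Subgroup G) : Set G) ⊆ (Sig : Set G))
    (hconjU'' : ((conjSub u U'' : Subgroup G) : Set G) ⊆ (Sig : Set G))
    (hfinU : (K ⊓ conjSub u U).relIndex K ≠ 0)
    (hfinU'' : (K ⊓ conjSub u U'').relIndex K ≠ 0)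
    (hXU : (Hsub ⊓ conjSub u U) ≤ Hsub ∧ IsCompact ((Hsub ⊓ conjSub u U : Subgroup G) : Set G) ∧
      (∃ O : Set G, IsOpen O ∧ ((Hsub ⊓ conjSub u U : Subgroup G) : Set G) = O ∩ (Hsub : Set G)) ∧
      ((Hsub ⊓ conjSub u U : Subgroup G) : Set G) ⊆ (Sig : Set G) ∩ (Hsub : Set G))
    (hXU'' : (Hsub ⊓ conjSub u U'') ≤ Hsub ∧ IsCompact ((Hsub ⊓ conjSub u U'' : Subgroup G) : Set G) ∧
      (∃ O : Set G, IsOpen O ∧ ((Hsub ⊓ conjSub u U'' : Subgroup G) : Set G) = O ∩ (Hsub : Set G)) ∧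
      ((Hsub ⊓ conjSub u U'' : Subgroup G) : Set G) ⊆ (Sig : Set G) ∩ (Hsub : Set G))
    -- the finite pullback maps on Iwasawa cohomology (unique, by Statement 1)
    (fpU : FH.Iw K →ₗ[A] FH.Iw (K ⊓ conjSub u U))
    (hfpU : IwFinPullSpec FH K (K ⊓ conjSub u U) fpU)
    (fpU'' : FH.Iw K →ₗ[A] FH.Iw (K ⊓ conjSub u U''))
    (hfpU'' : IwFinPullSpec FH K (K ⊓ conjSub u U'') fpU'')
    -- hypothesis (i)
    (hi : K ⊓ conjSub u U'' = K ⊓ conjSub u U')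
    -- hypothesis (ii)
    (R : Finset G) (hRmem : ∀ γ ∈ R, u * γ * u⁻¹ ∈ K ∧ γ ∈ U)
    (hRcover : ∀ v ∈ U, ∃! γ, γ ∈ R ∧ v * γ⁻¹ ∈ U')
    (hindex : (K ⊓ conjSub u U').relIndex (K ⊓ conjSub u U) = U'.relIndex U) :
    FG.push 1 U'' U'
        (pushClass ι u K U'' hXU'' (inf_le_inf_right _ hKH) fpU'' z) =
      FG.pull 1 U' U (pushClass ι u K U hXU (inf_le_inf_right _ hKH) fpU z) ∧
    (∀ τ : G, τ⁻¹ ∈ Sig → U' = U ⊓ conjSub τ U → (∀ x ∈ U'', τ⁻¹ * x * τ ∈ U) →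
      FG.push τ U'' U (pushClass ι u K U'' hXU'' (inf_le_inf_right _ hKH) fpU'' z) =
        heckeT FG τ U (pushClass ι u K U hXU (inf_le_inf_right _ hKH) fpU z)) :=
  stmt_8_general Sig Hsub hHcl FH FG hFH ι u huinv K hKH hKcpt z U U' U'' hU hU' hU'' hU''U' hU'U
    hconjU hconjU'' hXU hXU'' fpU hfpU fpU'' hfpU'' hi R hRmem hRcover
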